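/- Let R ⊆ ℝ be an open interval and A : ℝ → ℝ be twice differentiable on R with A''(θ) ≥ κ₁ > 0 for all θ ∈ R. Let Y, Θ̂, Θ* ∈ ℝ^{n×p} with all entries of Θ̂ and Θ* in R, rank(Θ̂) ≤ d + r, rank(Θ*) ≤ d + r, and suppose L(Θ̂) ≤ L(Θ*). Then ‖Θ̂ − Θ*‖_F ≤ (2√(2(d+r)) / κ₁) · ‖Y − A'(Θ*)‖_op. (Deterministic core of Theorem 3.1 bounding the estimation error of the joint maximum likelihood estimate of the natural parameter matrix.) -/

import Mathlib

open Matrix MeasureTheory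
open scoped BigOperators ENNReal

noncomputable def opNorm {m n : ℕ} (M : Matrix (Fin m) (Fin n) ℝ) : ℝ :=
  ‖LinearMap.toContinuousLinearMap (Matrix.toEuclideanLin M)‖

noncomputable def frobNorm {m n : ℕ} (M : Matrix (Fin m) (Fin n) ℝ) : ℝ :=
  Real.sqrt (∑ i, ∑ j, (M i j) ^ 2)

noncomputable def euclNorm {k : ℕ} (v : Fin k → ℝ) : ℝ :=
  Real.sqrt (∑ i, (v i) ^ 2)

noncomputable def proj {p r : ℕ} (Γ : Matrix (Fin p) (Fin r) ℝ) : Matrix (Fin p) (Fin p) ℝ :=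
  Γ * (Γᵀ * Γ)⁻¹ * Γᵀ

noncomputable def nthLargestEigenvalue {p : ℕ} (M : Matrix (Fin p) (Fin p) ℝ) (k : ℕ) : ℝ :=
  if h : M.IsHermitian then (List.insertionSort (· ≥ ·) (List.ofFn h.eigenvalues)).getD (k - 1) 0
  else 0

/-- Negative log-likelihood `L(Θ) = (1/n)(−tr(YᵀΘ) + Σ_{i,j} A(Θ_{ij}))`. -/
noncomputable def negLogLik {n p : ℕ} (A : ℝ → ℝ)
    (Y Θ : Matrix (Fin n) (Fin p) ℝ) : ℝ :=
  (1 / (n : ℝ)) * (-(Yᵀ * Θ).trace + ∑ i, ∑ j, A (Θ i j))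


/-!
Strong convexity of `A` (`A'' ≥ κ₁`) and `L(Θ̂) ≤ L(Θ*)` give, with `Δ = Θ̂ − Θ*` and
`M = Y − A'(Θ*)`, the basic inequality `κ₁/2 ‖Δ‖_F² ≤ ⟨M, Δ⟩`. Expanding `⟨M, Δ⟩` along the right
singular vectors `v_k` of `Δ` bounds it by `‖M‖_op ∑_k ‖Δ v_k‖`, the nuclear norm of `Δ`; only
`rank Δ ≤ 2(d + r)` of the `‖Δ v_k‖` are nonzero and their squares sum to `‖Δ‖_F²`, so
Cauchy–Schwarz gives `⟨M, Δ⟩ ≤ ‖M‖_op √(2(d + r)) ‖Δ‖_F`. Dividing by `‖Δ‖_F` concludes.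
-/

open Finset

theorem ConvexOn.add_deriv_mul_sub_le {S : Set ℝ} {f : ℝ → ℝ} {f' x y : ℝ}
    (hf : ConvexOn ℝ S f) (hx : x ∈ S) (hy : y ∈ S) (hf' : HasDerivAt f f' x) :
    f x + f' * (y - x) ≤ f y := by
  rcases lt_trichotomy x y with hxy | rfl | hxy
  · have := hf.le_slope_of_hasDerivAt hx hy hxy hf'
    rw [slope_def_field, le_div_iff₀ (sub_pos.2 hxy)] at this
    linarith
  · simp
  · have := hf.slope_le_of_hasDerivAt hy hx hxy hf'
    rw [slope_def_field, div_le_iff₀ (sub_pos.2 hxy)] at this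
    linarith

theorem add_deriv_mul_sub_add_sq_le_of_le_deriv2 {S : Set ℝ} (hS : Convex ℝ S)
    {f f' f'' : ℝ → ℝ} {κ x y : ℝ}
    (hf : ∀ t ∈ S, HasDerivAt f (f' t) t) (hf' : ∀ t ∈ S, HasDerivAt f' (f'' t) t)
    (hκ : ∀ t ∈ S, κ ≤ f'' t) (hx : x ∈ S) (hy : y ∈ S) :
    f x + f' x * (y - x) + κ / 2 * (y - x) ^ 2 ≤ f y := by
  have hg : ∀ t ∈ S, HasDerivAt (fun s => f s - κ / 2 * s ^ 2) (f' t - κ * t) t := fun t ht =>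
    ((hf t ht).sub ((hasDerivAt_pow 2 t).const_mul (κ / 2))).congr_deriv (by ring)
  have hg' : ∀ t ∈ S, HasDerivAt (fun s => f' s - κ * s) (f'' t - κ) t := fun t ht =>
    ((hf' t ht).sub ((hasDerivAt_id t).const_mul κ)).congr_deriv (by ring)
  have hconv : ConvexOn ℝ S (fun s => f s - κ / 2 * s ^ 2) :=
    convexOn_of_hasDerivWithinAt2_nonneg hS
      (fun t ht => (hg t ht).continuousAt.continuousWithinAt)
      (fun t ht => (hg t (interior_subset ht)).hasDerivWithinAt)
      (fun t ht => (hg' t (interior_subset ht)).hasDerivWithinAt)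
      (fun t ht => sub_nonneg.2 (hκ t (interior_subset ht)))
  have := hconv.add_deriv_mul_sub_le hx hy (hg x hx)
  linarith

theorem le_div_of_mul_sq_le_mul {a b x : ℝ} (ha : 0 < a) (hb : 0 ≤ b) (hx : 0 ≤ x)
    (h : a * x ^ 2 ≤ b * x) : x ≤ b / a := by
  rw [le_div_iff₀ ha]
  rcases hx.eq_or_lt with rfl | hx
  · simpa using hb
  · nlinarith

theorem Finset.sum_le_sqrt_card_mul_sqrt_sum_sq {ι : Type*} [Fintype ι] (f : ι → ℝ) :
    ∑ i, f i ≤ √(#{i | f i ≠ 0} : ℕ) * √(∑ i, f i ^ 2) := by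
  set s : Finset ι := {i | f i ≠ 0}
  have hsum : ∑ i, f i = ∑ i ∈ s, f i :=
    (sum_filter_ne_zero _).symm
  have hsq : ∑ i ∈ s, f i ^ 2 ≤ ∑ i, f i ^ 2 :=
    sum_le_sum_of_subset_of_nonneg (subset_univ s) fun i _ _ => sq_nonneg (f i)
  rw [← Real.sqrt_mul (Nat.cast_nonneg _), hsum]
  refine (le_abs_self _).trans (Real.abs_le_sqrt ?_)
  exact sq_sum_le_card_mul_sum_sq.trans (by gcongr)

theorem Matrix.rank_sub_le {m n K : Type*} [Fintype n] [Field K] (A B : Matrix m n K) :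
    (A - B).rank ≤ A.rank + B.rank := by
  have hrange : LinearMap.range (A - B).mulVecLin ≤
      LinearMap.range A.mulVecLin ⊔ LinearMap.range B.mulVecLin := by
    rintro _ ⟨x, rfl⟩
    rw [mulVecLin_apply, sub_mulVec]
    exact Submodule.sub_mem _ (Submodule.mem_sup_left ⟨x, rfl⟩) (Submodule.mem_sup_right ⟨x, rfl⟩)
  exact (Submodule.finrank_mono hrange).trans (Submodule.finrank_add_le_finrank_add_finrank _ _)

theorem Matrix.mulVec_col_apply {l m n α : Type*} [Fintype m] [NonUnitalNonAssocSemiring α]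
    (M : Matrix l m α) (U : Matrix m n α) (i : l) (j : n) :
    (M *ᵥ U.col j) i = (M * U) i j :=
  rfl

section Frobenius

variable {m n : Type*} [Fintype m] [Fintype n]

theorem Matrix.sum_mul_eq_trace_mul_transpose {α : Type*} [NonUnitalNonAssocSemiring α]
    (M N : Matrix m n α) :
    ∑ i, ∑ j, M i j * N i j = (M * Nᵀ).trace := by
  simp [trace, mul_apply]

theorem Matrix.sum_mul_mul_unitary [DecidableEq n] (M N : Matrix m n ℝ) {U : Matrix n n ℝ}
    (hU : U ∈ unitaryGroup n ℝ) :
    ∑ i, ∑ k, (M * U) i k * (N * U) i k = ∑ i, ∑ j, M i j * N i j := by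
  have hUUt : U * Uᵀ = 1 := by
    simpa [star_eq_conjTranspose, conjTranspose_eq_transpose_of_trivial] using
      mem_unitaryGroup_iff.mp hU
  rw [sum_mul_eq_trace_mul_transpose, sum_mul_eq_trace_mul_transpose, transpose_mul,
    Matrix.mul_assoc, ← Matrix.mul_assoc U, hUUt, Matrix.one_mul]

end Frobenius

section RightSingularVectors

variable {m n : Type*} [Fintype m] [Fintype n] [DecidableEq n]

noncomputable def Matrix.rightSingularVectors (Δ : Matrix m n ℝ) : Matrix n n ℝ :=
  (isHermitian_conjTranspose_mul_self Δ).eigenvectorUnitary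

theorem Matrix.rightSingularVectors_mem_unitaryGroup (Δ : Matrix m n ℝ) :
    Δ.rightSingularVectors ∈ unitaryGroup n ℝ :=
  Subtype.prop _

theorem Matrix.card_mulVec_rightSingularVectors_ne_zero_le_rank (Δ : Matrix m n ℝ) :
    #{k | Δ *ᵥ Δ.rightSingularVectors.col k ≠ 0} ≤ Δ.rank := by
  set hH := isHermitian_conjTranspose_mul_self Δ
  have hsub : ∀ k, Δ *ᵥ Δ.rightSingularVectors.col k ≠ 0 → hH.eigenvalues k ≠ 0 := by
    intro k hk hzero
    apply hk
    have hker : Δ.rightSingularVectors.col k ∈ LinearMap.ker (Δᵀ * Δ).mulVecLin := by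
      have := hH.mulVec_eigenvectorBasis k
      rw [hzero, zero_smul] at this
      exact this
    rw [ker_mulVecLin_transpose_mul_self] at hker
    exact hker
  calc #{k | Δ *ᵥ Δ.rightSingularVectors.col k ≠ 0} ≤ #{k | hH.eigenvalues k ≠ 0} :=
        card_le_card (monotone_filter_right _ fun k _ => hsub k)
    _ = Δ.rank := by
        rw [← Fintype.card_subtype, ← hH.rank_eq_card_non_zero_eigs,
          conjTranspose_eq_transpose_of_trivial, rank_transpose_mul_self]

end RightSingularVectors

section Norms

variable {k m n : ℕ}

theorem euclNorm_eq_norm_toLp (v : Fin k → ℝ) : euclNorm v = ‖WithLp.toLp 2 v‖ := by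
  simp [EuclideanSpace.norm_eq, euclNorm]

theorem sum_mul_le_euclNorm_mul_euclNorm (v w : Fin k → ℝ) :
    ∑ i, v i * w i ≤ euclNorm v * euclNorm w := by
  have := real_inner_le_norm (WithLp.toLp 2 v) (WithLp.toLp 2 w)
  simpa [euclNorm_eq_norm_toLp, EuclideanSpace.inner_eq_star_dotProduct, dotProduct, mul_comm]
    using this

theorem opNorm_nonneg (M : Matrix (Fin m) (Fin n) ℝ) : 0 ≤ opNorm M :=
  norm_nonneg _

theorem euclNorm_mulVec_le (M : Matrix (Fin m) (Fin n) ℝ) (v : Fin n → ℝ) :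
    euclNorm (M *ᵥ v) ≤ opNorm M * euclNorm v := by
  simpa [euclNorm_eq_norm_toLp, opNorm] using
    (LinearMap.toContinuousLinearMap (toEuclideanLin M)).le_opNorm (WithLp.toLp 2 v)

theorem euclNorm_col_unitary {U : Matrix (Fin n) (Fin n) ℝ} (hU : U ∈ unitaryGroup (Fin n) ℝ)
    (j : Fin n) : euclNorm (U.col j) = 1 := by
  have := congrFun (congrFun (mem_unitaryGroup_iff'.mp hU) j) j
  simp only [mul_apply, star_apply, star_trivial, one_apply_eq] at this
  simp [euclNorm, col, sq, this]

theorem euclNorm_nonneg (v : Fin k → ℝ) : 0 ≤ euclNorm v :=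
  Real.sqrt_nonneg _

theorem euclNorm_zero : euclNorm (0 : Fin k → ℝ) = 0 := by
  simp [euclNorm]

theorem euclNorm_sq (v : Fin k → ℝ) : euclNorm v ^ 2 = ∑ i, v i ^ 2 :=
  Real.sq_sqrt (by positivity)

theorem frobNorm_nonneg (M : Matrix (Fin m) (Fin n) ℝ) : 0 ≤ frobNorm M :=
  Real.sqrt_nonneg _

theorem frobNorm_sq (M : Matrix (Fin m) (Fin n) ℝ) : frobNorm M ^ 2 = ∑ i, ∑ j, M i j ^ 2 :=
  Real.sq_sqrt (by positivity)

theorem sum_mul_le_opNorm_mul_sum_euclNorm (M Δ : Matrix (Fin m) (Fin n) ℝ)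
    {U : Matrix (Fin n) (Fin n) ℝ} (hU : U ∈ unitaryGroup (Fin n) ℝ) :
    ∑ i, ∑ j, M i j * Δ i j ≤ opNorm M * ∑ k, euclNorm (Δ *ᵥ U.col k) := by
  rw [← Matrix.sum_mul_mul_unitary M Δ hU, sum_comm, mul_sum]
  gcongr with k
  calc ∑ i, (M * U) i k * (Δ * U) i k
      ≤ euclNorm (M *ᵥ U.col k) * euclNorm (Δ *ᵥ U.col k) :=
        sum_mul_le_euclNorm_mul_euclNorm _ _
    _ ≤ opNorm M * euclNorm (Δ *ᵥ U.col k) := by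
        gcongr
        · exact euclNorm_nonneg _
        · simpa [euclNorm_col_unitary hU] using euclNorm_mulVec_le M (U.col k)

theorem sum_euclNorm_mulVec_col_sq (Δ : Matrix (Fin m) (Fin n) ℝ)
    {U : Matrix (Fin n) (Fin n) ℝ} (hU : U ∈ unitaryGroup (Fin n) ℝ) :
    ∑ k, euclNorm (Δ *ᵥ U.col k) ^ 2 = frobNorm Δ ^ 2 := by
  simp_rw [euclNorm_sq, frobNorm_sq, Matrix.mulVec_col_apply, sq]
  rw [sum_comm, Matrix.sum_mul_mul_unitary Δ Δ hU]

theorem sum_mul_le_opNorm_mul_sqrt_rank_mul_frobNorm (M Δ : Matrix (Fin m) (Fin n) ℝ) :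
    ∑ i, ∑ j, M i j * Δ i j ≤ opNorm M * √Δ.rank * frobNorm Δ := by
  set V := Δ.rightSingularVectors
  have hV : V ∈ unitaryGroup (Fin n) ℝ := Δ.rightSingularVectors_mem_unitaryGroup
  have hcard : #{k | euclNorm (Δ *ᵥ V.col k) ≠ 0} ≤ Δ.rank := by
    refine (card_le_card (monotone_filter_right _ fun k _ hk hzero => hk ?_)).trans
      Δ.card_mulVec_rightSingularVectors_ne_zero_le_rank
    rw [show Δ *ᵥ V.col k = 0 from hzero, euclNorm_zero]
  calc ∑ i, ∑ j, M i j * Δ i j ≤ opNorm M * ∑ k, euclNorm (Δ *ᵥ V.col k) :=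
        sum_mul_le_opNorm_mul_sum_euclNorm M Δ hV
    _ ≤ opNorm M * (√Δ.rank * frobNorm Δ) := by
        gcongr
        · exact opNorm_nonneg M
        calc ∑ k, euclNorm (Δ *ᵥ V.col k)
            ≤ √(#{k | euclNorm (Δ *ᵥ V.col k) ≠ 0} : ℕ) * √(∑ k, euclNorm (Δ *ᵥ V.col k) ^ 2) :=
              sum_le_sqrt_card_mul_sqrt_sum_sq _
          _ ≤ √Δ.rank * frobNorm Δ := by
              rw [sum_euclNorm_mulVec_col_sq Δ hV, Real.sqrt_sq (frobNorm_nonneg Δ)]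
              gcongr
              exact frobNorm_nonneg Δ
    _ = opNorm M * √Δ.rank * frobNorm Δ := (mul_assoc _ _ _).symm

end Norms

theorem natCast_mul_negLogLik {n p : ℕ} (A : ℝ → ℝ) (Y Θ : Matrix (Fin n) (Fin p) ℝ) :
    n * negLogLik A Y Θ = ∑ i, ∑ j, (A (Θ i j) - Y i j * Θ i j) := by
  rcases n.eq_zero_or_pos with rfl | hn
  · simp
  have htr : (Yᵀ * Θ).trace = ∑ i, ∑ j, Y i j * Θ i j := by
    simp only [trace, diag_apply, mul_apply, transpose_apply]
    exact sum_comm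
  rw [negLogLik, ← mul_assoc, mul_one_div_cancel (by positivity), one_mul, htr]
  simp only [sum_sub_distrib]
  ring

theorem half_mul_sq_frobNorm_sub_le_of_negLogLik_le {n p : ℕ} {R : Set ℝ} (hR : Convex ℝ R)
    {A A' A'' : ℝ → ℝ} (hA' : ∀ θ ∈ R, HasDerivAt A (A' θ) θ)
    (hA'' : ∀ θ ∈ R, HasDerivAt A' (A'' θ) θ) {κ : ℝ} (hκ : ∀ θ ∈ R, κ ≤ A'' θ)
    {Y Θh Θs : Matrix (Fin n) (Fin p) ℝ} (hΘh : ∀ i j, Θh i j ∈ R) (hΘs : ∀ i j, Θs i j ∈ R)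
    (hL : negLogLik A Y Θh ≤ negLogLik A Y Θs) :
    κ / 2 * frobNorm (Θh - Θs) ^ 2 ≤
      ∑ i, ∑ j, (Y - of fun i j => A' (Θs i j)) i j * (Θh - Θs) i j := by
  have hL' : ∑ i, ∑ j, (A (Θh i j) - Y i j * Θh i j) ≤
      ∑ i, ∑ j, (A (Θs i j) - Y i j * Θs i j) := by
    simpa only [natCast_mul_negLogLik] using mul_le_mul_of_nonneg_left hL (Nat.cast_nonneg n)
  have hpoint : ∀ i j, κ / 2 * (Θh - Θs) i j ^ 2 ≤
      (Y - of fun i j => A' (Θs i j)) i j * (Θh - Θs) i j +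
        ((A (Θh i j) - Y i j * Θh i j) - (A (Θs i j) - Y i j * Θs i j)) := fun i j => by
    have := add_deriv_mul_sub_add_sq_le_of_le_deriv2 hR hA' hA'' hκ (hΘs i j) (hΘh i j)
    simp only [Matrix.sub_apply, of_apply]
    linarith
  calc κ / 2 * frobNorm (Θh - Θs) ^ 2 = ∑ i, ∑ j, κ / 2 * (Θh - Θs) i j ^ 2 := by
        simp only [frobNorm_sq, mul_sum]
    _ ≤ _ := sum_le_sum fun i _ => sum_le_sum fun j _ => hpoint i j
    _ ≤ ∑ i, ∑ j, (Y - of fun i j => A' (Θs i j)) i j * (Θh - Θs) i j := by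
        simp only [sum_add_distrib, sum_sub_distrib] at hL' ⊢
        linarith

theorem stmt5_general {n p d r : ℕ} (R : Set ℝ) (hRconv : Convex ℝ R)
    (A A' A'' : ℝ → ℝ)
    (hA' : ∀ θ ∈ R, HasDerivAt A (A' θ) θ)
    (hA'' : ∀ θ ∈ R, HasDerivAt A' (A'' θ) θ)
    (κ₁ : ℝ) (hκ₁ : 0 < κ₁) (hκ₁le : ∀ θ ∈ R, κ₁ ≤ A'' θ)
    (Y Θh Θs : Matrix (Fin n) (Fin p) ℝ)
    (hΘh : ∀ i j, Θh i j ∈ R) (hΘs : ∀ i j, Θs i j ∈ R)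
    (hrankh : Θh.rank ≤ d + r) (hranks : Θs.rank ≤ d + r)
    (hL : negLogLik A Y Θh ≤ negLogLik A Y Θs) :
    frobNorm (Θh - Θs) ≤
      (2 * Real.sqrt (2 * (d + r)) / κ₁) *
        opNorm (Y - Matrix.of fun i j => A' (Θs i j)) := by
  set M := Y - Matrix.of fun i j => A' (Θs i j)
  have hrank : ((Θh - Θs).rank : ℝ) ≤ 2 * (d + r) := by
    exact_mod_cast (rank_sub_le Θh Θs).trans (by omega)
  have hquad : κ₁ / 2 * frobNorm (Θh - Θs) ^ 2 ≤
      opNorm M * √(2 * (d + r)) * frobNorm (Θh - Θs) :=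
    (half_mul_sq_frobNorm_sub_le_of_negLogLik_le hRconv hA' hA'' hκ₁le hΘh hΘs hL).trans <|
      (sum_mul_le_opNorm_mul_sqrt_rank_mul_frobNorm M _).trans <| by
        gcongr
        · exact frobNorm_nonneg _
        · exact opNorm_nonneg M
  calc frobNorm (Θh - Θs) ≤ opNorm M * √(2 * (d + r)) / (κ₁ / 2) :=
        le_div_of_mul_sq_le_mul (by positivity) (mul_nonneg (opNorm_nonneg M) (Real.sqrt_nonneg _))
          (Real.sqrt_nonneg _) hquad
    _ = 2 * √(2 * (d + r)) / κ₁ * opNorm M := by field_simp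

/-- deterministic core of Theorem 3.1, bounding the estimation error of
the joint maximum likelihood estimate of the natural parameter matrix. -/
theorem stmt5 {n p d r : ℕ} (R : Set ℝ) (hRopen : IsOpen R) (hRconv : Convex ℝ R)
    (A A' A'' : ℝ → ℝ)
    (hA' : ∀ θ ∈ R, HasDerivAt A (A' θ) θ)
    (hA'' : ∀ θ ∈ R, HasDerivAt A' (A'' θ) θ)
    (κ₁ : ℝ) (hκ₁ : 0 < κ₁) (hκ₁le : ∀ θ ∈ R, κ₁ ≤ A'' θ)
    (Y Θh Θs : Matrix (Fin n) (Fin p) ℝ)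
    (hΘh : ∀ i j, Θh i j ∈ R) (hΘs : ∀ i j, Θs i j ∈ R)
    (hrankh : Θh.rank ≤ d + r) (hranks : Θs.rank ≤ d + r)
    (hL : negLogLik A Y Θh ≤ negLogLik A Y Θs) :
    frobNorm (Θh - Θs) ≤
      (2 * Real.sqrt (2 * (d + r)) / κ₁) *
        opNorm (Y - Matrix.of fun i j => A' (Θs i j)) :=
  stmt5_general R hRconv A A' A'' hA' hA'' κ₁ hκ₁ hκ₁le Y Θh Θs hΘh hΘs hrankh hranks hL
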